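/- Let T > 0 and let w : ℝ × [0,T) → ℝ be continuous, 1-periodic in the first variable, with continuous partial derivative ∂_t w on ℝ × [0,T). Define m(t) := min_{x∈[0,1]} w(x,t). Then m is locally Lipschitz continuous on [0,T), and for almost every t ∈ (0,T) the function m is differentiable at t, and for every ξ ∈ [0,1] with w(ξ,t) = m(t) one has m'(t) = ∂_t w(ξ,t). -/

import Mathlib

/-!
At each time the minimum is attained at some `ξ`, and `m ≤ w ξ` with equality at that time.
Hence the Lipschitz bound of the slices `w ξ` in time, which comes from a bound on `∂ₜ w`
over a compact rectangle, passes to `m`. By Rademacher's theorem `m` is then differentiable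
almost everywhere, and wherever it is, `w ξ - m` has a local minimum at `t`, which forces
`m'(t) = ∂ₜ w(ξ, t)`.
-/

open MeasureTheory Set Filter Topology
open scoped NNReal

theorem LipschitzOnWith.of_forall_exists_min {α ι : Type*} [PseudoMetricSpace α]
    {f : ι → α → ℝ} {m : α → ℝ} {S : Set ι} {s : Set α} {K : ℝ≥0}
    (hf : ∀ i ∈ S, LipschitzOnWith K (f i) s)
    (hmin : ∀ t ∈ s, ∃ i ∈ S, m t = f i t ∧ ∀ j ∈ S, f i t ≤ f j t) :
    LipschitzOnWith K m s := by
  refine LipschitzOnWith.of_le_add_mul K fun t ht u hu => ?_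
  obtain ⟨i, hi, hmt, hle⟩ := hmin t ht
  obtain ⟨j, hj, hmu, -⟩ := hmin u hu
  calc m t ≤ f j t := hmt ▸ hle j hj
    _ ≤ f j u + K * dist t u := (hf j hj).le_add_mul ht hu
    _ = m u + K * dist t u := by rw [hmu]

theorem exists_lipschitzOnWith_of_hasDerivWithinAt {ι : Type*} [TopologicalSpace ι]
    {f f' : ι → ℝ → ℝ} {S : Set ι} {s : Set ℝ} (hS : IsCompact S) (hs : IsCompact s)
    (hs_conv : Convex ℝ s) (hf : ∀ i ∈ S, ∀ t ∈ s, HasDerivWithinAt (f i) (f' i t) s t)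
    (hf' : ContinuousOn (fun p : ι × ℝ => f' p.1 p.2) (S ×ˢ s)) :
    ∃ K : ℝ≥0, ∀ i ∈ S, LipschitzOnWith K (f i) s := by
  obtain ⟨C, hC⟩ := (hS.prod hs).exists_bound_of_continuousOn hf'
  refine ⟨C.toNNReal, fun i hi => hs_conv.lipschitzOnWith_of_nnnorm_hasDerivWithin_le
    (hf i hi) fun t ht => ?_⟩
  rw [← NNReal.coe_le_coe, coe_nnnorm]
  exact (hC (i, t) ⟨hi, ht⟩).trans (Real.le_coe_toNNReal C)

theorem ae_differentiableAt_of_forall_lipschitzOnWith_Icc {f : ℝ → ℝ} {a T : ℝ}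
    (hf : ∀ b < T, ∃ K : ℝ≥0, LipschitzOnWith K f (Icc a b)) :
    ∀ᵐ t, t ∈ Ioo a T → DifferentiableAt ℝ f t := by
  obtain ⟨u, -, hu_lt, hu⟩ := exists_seq_strictMono_tendsto T
  have hdiff (n : ℕ) : ∀ᵐ t, t ∈ Ioo a (u n) → DifferentiableAt ℝ f t := by
    obtain ⟨K, hK⟩ := hf (u n) (hu_lt n)
    filter_upwards [(hK.mono Ioo_subset_Icc_self).ae_differentiableWithinAt_of_mem_real]
      with t ht hmem
    exact (ht hmem).differentiableAt (isOpen_Ioo.mem_nhds hmem)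
  filter_upwards [ae_all_iff.2 hdiff] with t ht hmem
  obtain ⟨n, hn⟩ := (hu.eventually (lt_mem_nhds hmem.2)).exists
  exact ht n ⟨hmem.1, hn⟩

theorem HasDerivAt.eq_of_eventuallyLE_of_eq {f g : ℝ → ℝ} {f' g' t : ℝ}
    (hf : HasDerivAt f f' t) (hg : HasDerivAt g g' t) (hle : f ≤ᶠ[𝓝 t] g) (heq : f t = g t) :
    f' = g' := by
  have hmin : IsLocalMin (g - f) t := by
    filter_upwards [hle] with s hs
    simp only [Pi.sub_apply, heq, sub_self, sub_nonneg, hs]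
  linarith [hmin.hasDerivAt_eq_zero (hg.sub hf)]

theorem min_evolution_lemma (T : ℝ) (w wt : ℝ → ℝ → ℝ)
    (hw : ContinuousOn (fun p : ℝ × ℝ => w p.1 p.2) (Set.univ ×ˢ Set.Ico 0 T))
    (hwt : ∀ x : ℝ, ∀ t ∈ Set.Ico (0 : ℝ) T,
      HasDerivWithinAt (fun t' => w x t') (wt x t) (Set.Ico 0 T) t)
    (hwtc : ContinuousOn (fun p : ℝ × ℝ => wt p.1 p.2) (Set.univ ×ˢ Set.Ico 0 T))
    (m : ℝ → ℝ) (hm : ∀ t : ℝ, m t = sInf ((fun x => w x t) '' Set.Icc (0 : ℝ) 1)) :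
    (∀ b : ℝ, b < T → ∃ L : NNReal, LipschitzOnWith L m (Set.Icc 0 b)) ∧
    (∀ᵐ t ∂(volume : Measure ℝ), t ∈ Set.Ioo (0 : ℝ) T →
      ∃ m' : ℝ, HasDerivAt m m' t ∧
        ∀ ξ ∈ Set.Icc (0 : ℝ) 1, w ξ t = m t → m' = wt ξ t) := by
  have hmin (t : ℝ) (ht : t ∈ Ico 0 T) :
      ∃ ξ ∈ Icc (0 : ℝ) 1, m t = w ξ t ∧ ∀ x ∈ Icc (0 : ℝ) 1, w ξ t ≤ w x t :=
    hm t ▸ isCompact_Icc.exists_sInf_image_eq_and_le (nonempty_Icc.2 zero_le_one)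
      (hw.comp (continuous_id.prodMk continuous_const).continuousOn fun _ _ => ⟨trivial, ht⟩)
  have hlip (b : ℝ) (hb : b < T) : ∃ L : ℝ≥0, LipschitzOnWith L m (Icc 0 b) := by
    have hsub : Icc 0 b ⊆ Ico 0 T := Icc_subset_Ico_right hb
    obtain ⟨K, hK⟩ := exists_lipschitzOnWith_of_hasDerivWithinAt isCompact_Icc isCompact_Icc
      (convex_Icc 0 b) (fun x _ t ht => (hwt x t (hsub ht)).mono hsub)
      (hwtc.mono (prod_mono (subset_univ _) hsub))
    exact ⟨K, LipschitzOnWith.of_forall_exists_min hK fun t ht => hmin t (hsub ht)⟩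
  refine ⟨hlip, ?_⟩
  filter_upwards [ae_differentiableAt_of_forall_lipschitzOnWith_Icc hlip] with t hdiff ht
  have hnhds : Ico 0 T ∈ 𝓝 t := Ico_mem_nhds ht.1 ht.2
  refine ⟨deriv m t, (hdiff ht).hasDerivAt, fun ξ hξ hξt => ?_⟩
  have hle : m ≤ᶠ[𝓝 t] fun s => w ξ s := by
    filter_upwards [hnhds] with s hs
    obtain ⟨x, -, hmx, hx⟩ := hmin s hs
    exact hmx ▸ hx ξ hξ
  have hwξ : HasDerivAt (fun s => w ξ s) (wt ξ t) t :=
    (hwt ξ t (mem_of_mem_nhds hnhds)).hasDerivAt hnhds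
  exact (hdiff ht).hasDerivAt.eq_of_eventuallyLE_of_eq hwξ hle hξt.symm
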